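/- Let S be a finite set of points in ℝ² in general position and let a, b, c ∈ S be three distinct points. If some point of S lies in the interior of the triangle with vertices a, b, c, then there exists a point i ∈ S lying in the interior of the triangle with vertices a, b, c such that no point of S lies in the interior of the triangle with vertices a, i, c. (Take for i the interior point of S nearest to the line through a and c.) -/

import Mathlib

/-- Orientation determinant of three points in the plane:
`det [[1,1,1],[pₓ,qₓ,rₓ],[p_y,q_y,r_y]]`.
The triple `(p,q,r)` is positively oriented iff `det3 p q r > 0`,
and negatively oriented iff `det3 p q r < 0`. -/
noncomputable def det3 (p q r : ℝ × ℝ) : ℝ :=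
  Matrix.det !![(1:ℝ), 1, 1; p.1, q.1, r.1; p.2, q.2, r.2]

/-- A set of points in the plane is in general position if no three
distinct points of it are collinear. -/
def InGenPos (S : Set (ℝ × ℝ)) : Prop :=
  ∀ p ∈ S, ∀ q ∈ S, ∀ r ∈ S, p ≠ q → p ≠ r → q ≠ r →
    ¬ Collinear ℝ ({p, q, r} : Set (ℝ × ℝ))

/-- `P` is a `k`-gon of `S`: a `k`-element subset of `S` in convex position,
i.e. every point of `P` is an extreme point of the convex hull of `P`. -/
def IsGon (k : ℕ) (S P : Set (ℝ × ℝ)) : Prop :=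
  P ⊆ S ∧ P.Finite ∧ P.ncard = k ∧
    ∀ p ∈ P, p ∈ Set.extremePoints ℝ (convexHull ℝ P)

/-- `P` is a `k`-hole of `S`: a `k`-gon of `S` whose convex hull contains
no point of `S` other than the `k` points of `P`. -/
def IsHole (k : ℕ) (S P : Set (ℝ × ℝ)) : Prop :=
  IsGon k S P ∧ ∀ q ∈ S, q ∈ convexHull ℝ P → q ∈ P

/-!
Among the points of `S` inside the triangle `a b c`, take `i` with `|det3 a i c|` minimal, i.e.
closest to the line `a c`. The map `p ↦ det3 a p c` is a nonconstant affine function vanishing at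
`a` and `c`, hence an open map, so it sends the interior of the triangle `a i c` into the open
interval between `0` and `det3 a i c`. A point of `S` inside `a i c` would lie inside `a b c` and be
strictly closer to the line `a c` than `i`.
-/

open Set

theorem det3_eq (p q r : ℝ × ℝ) :
    det3 p q r = (q.1 - p.1) * (r.2 - p.2) - (q.2 - p.2) * (r.1 - p.1) := by
  simp only [det3, Matrix.det_fin_three, Matrix.of_apply, Matrix.cons_val', Matrix.cons_val_zero,
    Matrix.cons_val_fin_one, Matrix.cons_val_one, Matrix.cons_val, one_mul]
  ring

theorem det3_left_eq_zero (a c : ℝ × ℝ) : det3 a a c = 0 := by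
  simp [det3_eq]

theorem det3_right_eq_zero (a c : ℝ × ℝ) : det3 a c c = 0 := by
  rw [det3_eq]
  ring

noncomputable def det3AffineMap (a c : ℝ × ℝ) : (ℝ × ℝ) →ᵃ[ℝ] ℝ where
  toFun p := det3 a p c
  linear := (c.2 - a.2) • LinearMap.fst ℝ ℝ ℝ - (c.1 - a.1) • LinearMap.snd ℝ ℝ ℝ
  map_vadd' p v := by
    simp only [vadd_eq_add, det3_eq, Prod.fst_add, Prod.snd_add, LinearMap.sub_apply,
      LinearMap.smul_apply, LinearMap.fst_apply, LinearMap.snd_apply, smul_eq_mul]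
    ring

theorem det3AffineMap_linear_ne_zero {a c : ℝ × ℝ} (hac : a ≠ c) :
    (det3AffineMap a c).linear ≠ 0 := by
  intro h
  have h₁ := LinearMap.congr_fun h (0, 1)
  have h₂ := LinearMap.congr_fun h (1, 0)
  simp only [det3AffineMap, LinearMap.sub_apply, LinearMap.smul_apply, LinearMap.fst_apply,
    LinearMap.snd_apply, smul_eq_mul, LinearMap.zero_apply] at h₁ h₂
  exact hac (Prod.ext (by linarith) (by linarith))

theorem abs_lt_abs_of_mem_interior_convexHull {E : Type*} [NormedAddCommGroup E]
    [NormedSpace ℝ E] [FiniteDimensional ℝ E] {f : E →ᵃ[ℝ] ℝ} (hf : f.linear ≠ 0)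
    {a x c p : E} (ha : f a = 0) (hc : f c = 0)
    (hp : p ∈ interior (convexHull ℝ {a, x, c})) : |f p| < |f x| := by
  have hopen : IsOpenMap f := AffineMap.isOpenMap_linear_iff.1 <|
    f.linear.isOpenMap_of_finiteDimensional (LinearMap.surjective hf)
  have hfp : f p ∈ interior (uIcc (f x) 0) := by
    have := hopen.image_interior_subset _ ⟨p, hp, rfl⟩
    rwa [f.image_convexHull, image_insert_eq, image_pair, ha, hc, insert_comm,
      pair_eq_singleton, convexHull_pair, segment_eq_uIcc] at this
  rw [uIcc, interior_Icc] at hfp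
  rcases le_total (f x) 0 with h | h
  · simp only [min_eq_left h, max_eq_right h, mem_Ioo] at hfp
    rw [abs_of_neg hfp.2, abs_of_nonpos h]
    linarith
  · simp only [min_eq_right h, max_eq_left h, mem_Ioo] at hfp
    rw [abs_of_pos hfp.1, abs_of_nonneg h]
    linarith

theorem abs_det3_lt_of_mem_interior_convexHull {a c x p : ℝ × ℝ} (hac : a ≠ c)
    (hp : p ∈ interior (convexHull ℝ {a, x, c})) : |det3 a p c| < |det3 a x c| :=
  abs_lt_abs_of_mem_interior_convexHull (det3AffineMap_linear_ne_zero hac)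
    (det3_left_eq_zero a c) (det3_right_eq_zero a c) hp

theorem convexHull_triple_subset_of_mem {E : Type*} [AddCommGroup E] [Module ℝ E] {a b c i : E}
    (hi : i ∈ convexHull ℝ {a, b, c}) : convexHull ℝ {a, i, c} ⊆ convexHull ℝ {a, b, c} := by
  refine convexHull_min ?_ (convex_convexHull ℝ _)
  simp only [insert_subset_iff, singleton_subset_iff]
  exact ⟨subset_convexHull ℝ _ (by simp), hi, subset_convexHull ℝ _ (by simp)⟩

theorem exists_interior_point_with_empty_subtriangle_general (S : Set (ℝ × ℝ))
    (hfin : S.Finite)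
    (a b c : ℝ × ℝ)
    (hac : a ≠ c)
    (hne : ∃ p ∈ S, p ∈ interior (convexHull ℝ ({a, b, c} : Set (ℝ × ℝ)))) :
    ∃ i ∈ S, i ∈ interior (convexHull ℝ ({a, b, c} : Set (ℝ × ℝ))) ∧
      ∀ p ∈ S, p ∉ interior (convexHull ℝ ({a, i, c} : Set (ℝ × ℝ))) := by
  obtain ⟨i, ⟨hiS, hi⟩, hmin⟩ := exists_min_image
    {p ∈ S | p ∈ interior (convexHull ℝ {a, b, c})} (fun p ↦ |det3 a p c|) (hfin.sep _) hne
  refine ⟨i, hiS, hi, fun p hpS hp ↦ ?_⟩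
  have hp' : p ∈ interior (convexHull ℝ {a, b, c}) :=
    interior_mono (convexHull_triple_subset_of_mem (interior_subset hi)) hp
  exact (hmin p ⟨hpS, hp'⟩).not_gt (abs_det3_lt_of_mem_interior_convexHull hac hp)

/-- If some point of `S` lies inside the triangle `a b c`, then there is a
point `i` of `S` inside this triangle such that the triangle `a i c` contains
no point of `S` in its interior. -/
theorem exists_interior_point_with_empty_subtriangle (S : Set (ℝ × ℝ))
    (hfin : S.Finite) (hgp : InGenPos S)
    (a b c : ℝ × ℝ) (ha : a ∈ S) (hb : b ∈ S) (hc : c ∈ S)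
    (hab : a ≠ b) (hac : a ≠ c) (hbc : b ≠ c)
    (hne : ∃ p ∈ S, p ∈ interior (convexHull ℝ ({a, b, c} : Set (ℝ × ℝ)))) :
    ∃ i ∈ S, i ∈ interior (convexHull ℝ ({a, b, c} : Set (ℝ × ℝ))) ∧
      ∀ p ∈ S, p ∉ interior (convexHull ℝ ({a, i, c} : Set (ℝ × ℝ))) :=
  exists_interior_point_with_empty_subtriangle_general S hfin a b c hac hne
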